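/- Let n ≥ 4. If u, v, w are elements of the quasi-abelian group QA_n with u v w = 1, u of order 2, v of order 2^{n-1}, w of order 2^{n-1}, and {u, v, w} generating QA_n, then there exists an automorphism φ of QA_n with φ(u) = y, φ(v) = y x^{-1} and φ(w) = x. In particular, any two such generating triples of QA_n are equivalent under Aut(QA_n). -/

import Mathlib

/-- The relators of the quasi-abelian group `QA_n`:
`x^(2^(n-1)) = 1`, `y^2 = 1`, `y * x * y⁻¹ = x^(2^(n-2)+1)`.
The generator `x` is encoded by `true` and `y` by `false`. -/
def qaRels (n : ℕ) : Set (FreeGroup Bool) :=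
  {FreeGroup.of true ^ 2 ^ (n - 1),
   FreeGroup.of false ^ 2,
   FreeGroup.of false * FreeGroup.of true * (FreeGroup.of false)⁻¹ *
     (FreeGroup.of true ^ (2 ^ (n - 2) + 1))⁻¹}

/-- The quasi-abelian group `QA_n`, given by the presentation
`⟨x, y ∣ x^(2^(n-1)) = y^2 = 1, y x y⁻¹ = x^(2^(n-2)+1)⟩`. -/
abbrev QA (n : ℕ) : Type := PresentedGroup (qaRels n)

/-- The generator `x` of `QA_n`. -/
def qx (n : ℕ) : QA n := PresentedGroup.of true

/-- The generator `y` of `QA_n`. -/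
def qy (n : ℕ) : QA n := PresentedGroup.of false

/-!
Every element of `QA_n` is `x^a` or `x^a y`, so `QA_n` is finite. Let `u² = 1` and let `w`
of order `2^(n-1)` generate together with `u`. If `u` were a power of `x`, some nontrivial
homomorphism `QA_n → ℤ/2` would kill both `u` and `w` (`x ↦ 0, y ↦ 1` if `w` is a power of
`x`; `x, y ↦ 1` if `w = x^a y`, because then `a` is odd and `u = x^c` with `c` even),
contradicting generation. So `u = x^c y`, and a computation with normal forms gives
`u w u⁻¹ = w^(2^(n-2)+1)`. Hence `x ↦ w, y ↦ u` defines a surjective, hence bijective,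
endomorphism of `QA_n`; its inverse is the required automorphism, as `v = u w⁻¹`.
-/

lemma inv_eq_self_of_sq_eq_one {G : Type*} [Group G] {g : G} (h : g ^ 2 = 1) : g⁻¹ = g :=
  inv_eq_of_mul_eq_one_right (by rwa [← sq])

namespace QA

variable {n : ℕ}

lemma qx_pow_two_pow : qx n ^ 2 ^ (n - 1) = 1 := by
  have h := PresentedGroup.one_of_mem (rels := qaRels n) (Set.mem_insert _ _)
  rwa [map_pow] at h

lemma qy_sq : qy n ^ 2 = 1 := by
  have h := PresentedGroup.one_of_mem (rels := qaRels n) (x := FreeGroup.of false ^ 2)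
    (by simp [qaRels])
  rwa [map_pow] at h

lemma qy_inv : (qy n)⁻¹ = qy n :=
  inv_eq_self_of_sq_eq_one qy_sq

lemma qy_mul_qx_mul_qy_inv : qy n * qx n * (qy n)⁻¹ = qx n ^ (2 ^ (n - 2) + 1) := by
  have h := PresentedGroup.one_of_mem (rels := qaRels n)
    (x := FreeGroup.of false * FreeGroup.of true * (FreeGroup.of false)⁻¹ *
      (FreeGroup.of true ^ (2 ^ (n - 2) + 1))⁻¹) (by simp [qaRels])
  rwa [map_mul, map_mul, map_mul, map_inv, map_inv, map_pow, mul_inv_eq_one] at h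

lemma qy_mul_qx_zpow (a : ℤ) : qy n * qx n ^ a = qx n ^ ((2 ^ (n - 2) + 1) * a) * qy n := by
  rw [← mul_inv_eq_iff_eq_mul, ← conj_zpow, qy_mul_qx_mul_qy_inv, ← zpow_natCast,
    ← zpow_mul]
  push_cast
  rfl

lemma qx_zpow_mul_qy_mul_qx_zpow (a b : ℤ) :
    qx n ^ a * qy n * qx n ^ b = qx n ^ (a + (2 ^ (n - 2) + 1) * b) * qy n := by
  rw [mul_assoc, qy_mul_qx_zpow, ← mul_assoc, ← zpow_add]

lemma qx_zpow_mul_qy_mul_qx_zpow_mul_qy (a b : ℤ) :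
    qx n ^ a * qy n * (qx n ^ b * qy n) = qx n ^ (a + (2 ^ (n - 2) + 1) * b) := by
  rw [← mul_assoc, qx_zpow_mul_qy_mul_qx_zpow, mul_assoc, ← sq, qy_sq, mul_one]

lemma qx_zpow_mul_qy_sq (a : ℤ) : (qx n ^ a * qy n) ^ 2 = qx n ^ (a * (2 ^ (n - 2) + 2)) := by
  rw [sq, qx_zpow_mul_qy_mul_qx_zpow_mul_qy]
  congr 1
  ring

lemma qx_zpow_eq_qx_zpow_of_dvd {a b : ℤ} (h : (2 : ℤ) ^ (n - 1) ∣ a - b) :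
    qx n ^ a = qx n ^ b := by
  obtain ⟨t, ht⟩ := h
  rw [← sub_add_cancel a b, zpow_add, ht, zpow_mul, ← Nat.cast_ofNat, ← Nat.cast_pow,
    zpow_natCast, qx_pow_two_pow, one_zpow, one_mul]

lemma closure_qx_qy : Subgroup.closure {qx n, qy n} = ⊤ := by
  rw [← PresentedGroup.closure_range_of]
  congr
  ext g
  simp only [Set.mem_insert_iff, Set.mem_singleton_iff, Set.mem_range, Bool.exists_bool, qx, qy]
  tauto

lemma exists_eq_qx_zpow_or_eq_qx_zpow_mul_qy (g : QA n) :
    ∃ a : ℤ, g = qx n ^ a ∨ g = qx n ^ a * qy n := by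
  have qx_zpow_mul (e : ℤ) {g : QA n} : (∃ a : ℤ, g = qx n ^ a ∨ g = qx n ^ a * qy n) →
      ∃ a : ℤ, qx n ^ e * g = qx n ^ a ∨ qx n ^ e * g = qx n ^ a * qy n := by
    rintro ⟨a, rfl | rfl⟩
    · exact ⟨e + a, .inl (zpow_add _ _ _).symm⟩
    · exact ⟨e + a, .inr (by rw [← mul_assoc, zpow_add])⟩
  have qy_mul {g : QA n} : (∃ a : ℤ, g = qx n ^ a ∨ g = qx n ^ a * qy n) →
      ∃ a : ℤ, qy n * g = qx n ^ a ∨ qy n * g = qx n ^ a * qy n := by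
    rintro ⟨a, rfl | rfl⟩
    · exact ⟨_, .inr (qy_mul_qx_zpow a)⟩
    · refine ⟨(2 ^ (n - 2) + 1) * a, .inl ?_⟩
      rw [← mul_assoc, qy_mul_qx_zpow, mul_assoc, ← sq, qy_sq, mul_one]
  induction closure_qx_qy ▸ Subgroup.mem_top g using Subgroup.closure_induction_left with
  | one => exact ⟨0, .inl (zpow_zero _).symm⟩
  | mul_left s hs g _ ih =>
    rcases hs with rfl | rfl
    exacts [zpow_one (qx n) ▸ qx_zpow_mul 1 ih, qy_mul ih]
  | inv_mul_cancel s hs g _ ih =>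
    rcases hs with rfl | rfl
    · exact zpow_neg_one (qx n) ▸ qx_zpow_mul (-1) ih
    · rw [qy_inv]
      exact qy_mul ih

instance : Finite (QA n) := by
  have hx : IsOfFinOrder (qx n) :=
    isOfFinOrder_iff_pow_eq_one.2 ⟨_, by positivity, qx_pow_two_pow⟩
  have := hx.finite_zpowers.to_subtype
  refine Finite.of_surjective
    (fun p : Subgroup.zpowers (qx n) × Bool => p.1 * cond p.2 (qy n) 1) fun g => ?_
  obtain ⟨a, rfl | rfl⟩ := exists_eq_qx_zpow_or_eq_qx_zpow_mul_qy g
  exacts [⟨(⟨_, Subgroup.zpow_mem_zpowers _ a⟩, false), mul_one _⟩,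
    ⟨(⟨_, Subgroup.zpow_mem_zpowers _ a⟩, true), rfl⟩]

def lift {G : Type*} [Group G] {a b : G} (ha : a ^ 2 ^ (n - 1) = 1) (hb : b ^ 2 = 1)
    (hab : b * a * b⁻¹ = a ^ (2 ^ (n - 2) + 1)) : QA n →* G :=
  PresentedGroup.toGroup (f := fun i => cond i a b) <| by
    rintro r (rfl | rfl | rfl) <;> simp [ha, hb, hab]

section lift

variable {G : Type*} [Group G] {a b : G} (ha : a ^ 2 ^ (n - 1) = 1) (hb : b ^ 2 = 1)
    (hab : b * a * b⁻¹ = a ^ (2 ^ (n - 2) + 1))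

@[simp] lemma lift_qx : lift ha hb hab (qx n) = a := PresentedGroup.toGroup.of _

@[simp] lemma lift_qy : lift ha hb hab (qy n) = b := PresentedGroup.toGroup.of _

end lift

/-- The relations only bound the order of `x`; an element of order `2^(n-1)` pins it down. -/
lemma orderOf_qx (hn : 3 ≤ n) {w : QA n} (hw : orderOf w = 2 ^ (n - 1)) :
    orderOf (qx n) = 2 ^ (n - 1) := by
  obtain ⟨k, rfl⟩ := Nat.exists_eq_add_of_le' hn
  refine orderOf_eq_prime_pow (n := k + 1) (fun hx => ?_) qx_pow_two_pow
  refine pow_ne_one_of_lt_orderOf (x := w) (n := 2 ^ (k + 1)) (by positivity)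
    (by rw [hw]; exact Nat.pow_lt_pow_right (by norm_num) (by omega)) ?_
  have hx' (e : ℤ) : qx (k + 3) ^ ((2 ^ (k + 1) : ℕ) * e) = 1 := by
    rw [zpow_mul, zpow_natCast, hx, one_zpow]
  obtain ⟨a, rfl | rfl⟩ := exists_eq_qx_zpow_or_eq_qx_zpow_mul_qy w
  · rw [← zpow_natCast, ← zpow_mul, ← hx' a]
    push_cast
    congr 1
    ring
  · rw [pow_succ', pow_mul, qx_zpow_mul_qy_sq, ← zpow_natCast, ← zpow_mul,
      ← hx' (a * (2 ^ k + 1))]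
    push_cast
    congr 1
    ring

def toZModTwo (hn : 3 ≤ n) (s t : ZMod 2) : QA n →* Multiplicative (ZMod 2) :=
  have h2 (g : Multiplicative (ZMod 2)) : g ^ 2 = 1 := by revert g; decide
  have hn' : n - 1 = n - 2 + 1 := by omega
  have hn'' : n - 2 = n - 3 + 1 := by omega
  lift (a := .ofAdd s) (b := .ofAdd t)
    (by rw [hn', pow_succ, pow_mul, h2])
    (h2 _)
    (by rw [mul_inv_cancel_comm, pow_succ, hn'', pow_succ, pow_mul, h2, one_mul])

section toZModTwo

variable (hn : 3 ≤ n) (s t : ZMod 2)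

lemma toZModTwo_qx_zpow (a : ℤ) : toZModTwo hn s t (qx n ^ a) = .ofAdd ((a : ZMod 2) * s) := by
  rw [map_zpow, toZModTwo, lift_qx, ← ofAdd_zsmul, zsmul_eq_mul]

lemma toZModTwo_qy : toZModTwo hn s t (qy n) = .ofAdd t := by
  rw [toZModTwo, lift_qy]

end toZModTwo

lemma closure_qx_zpow_pair_ne_top (hn : 3 ≤ n) (c a : ℤ) :
    Subgroup.closure {qx n ^ c, qx n ^ a} ≠ ⊤ := fun hgen => by
  have h := MonoidHom.eq_of_eqOn_dense hgen (f := toZModTwo hn 0 1) (g := 1)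
    (by rintro g (rfl | rfl) <;> simp [toZModTwo_qx_zpow])
  have hy := DFunLike.congr_fun h (qy n)
  rw [toZModTwo_qy, MonoidHom.one_apply] at hy
  exact absurd hy (by decide)

lemma closure_qx_zpow_qx_zpow_mul_qy_ne_top (hn : 3 ≤ n) (hx : orderOf (qx n) = 2 ^ (n - 1))
    {c a : ℤ} (hc : (qx n ^ c) ^ 2 = 1) (ha : orderOf (qx n ^ a * qy n) = 2 ^ (n - 1)) :
    Subgroup.closure {qx n ^ c, qx n ^ a * qy n} ≠ ⊤ := fun hgen => by
  obtain ⟨k, rfl⟩ := Nat.exists_eq_add_of_le' hn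
  have hc : Even c := by
    rw [← zpow_natCast, ← zpow_mul, ← orderOf_dvd_iff_zpow_eq_one, hx] at hc
    have h4 : (4 : ℤ) ∣ c * 2 := (Dvd.intro (2 ^ k) (by push_cast; ring)).trans hc
    exact even_iff_two_dvd.2 (by omega)
  have ha : Odd a := by
    refine Int.not_even_iff_odd.1 fun ⟨t, ht⟩ => pow_ne_one_of_lt_orderOf
      (x := qx _ ^ a * qy _) (n := 2 ^ (k + 1)) (by positivity)
      (by rw [ha]; exact Nat.pow_lt_pow_right (by norm_num) (by omega)) ?_
    rw [pow_succ', pow_mul, qx_zpow_mul_qy_sq, ← zpow_natCast, ← zpow_mul, ← zpow_zero (qx _)]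
    refine qx_zpow_eq_qx_zpow_of_dvd ⟨t * (2 ^ k + 1), ?_⟩
    rw [ht]
    push_cast
    ring
  have h := MonoidHom.eq_of_eqOn_dense hgen (f := toZModTwo hn 1 1) (g := 1)
    (by rintro g (rfl | rfl) <;> simp [toZModTwo_qx_zpow, toZModTwo_qy,
      ZMod.intCast_eq_zero_iff_even.2 hc, ZMod.intCast_eq_one_iff_odd.2 ha, ← ofAdd_add,
      CharTwo.add_self_eq_zero])
  have hx := DFunLike.congr_fun h (qx _)
  rw [← zpow_one (qx _), toZModTwo_qx_zpow, MonoidHom.one_apply] at hx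
  exact absurd hx (by decide)

lemma qx_zpow_mul_qy_conj_qx_zpow {c : ℤ} (hu : (qx n ^ c * qy n) ^ 2 = 1) (a : ℤ) :
    qx n ^ c * qy n * qx n ^ a * (qx n ^ c * qy n)⁻¹ = (qx n ^ a) ^ (2 ^ (n - 2) + 1) := by
  rw [inv_eq_self_of_sq_eq_one hu, qx_zpow_mul_qy_mul_qx_zpow,
    qx_zpow_mul_qy_mul_qx_zpow_mul_qy, ← zpow_natCast, ← zpow_mul]
  push_cast
  rw [show c + (2 ^ (n - 2) + 1) * a + (2 ^ (n - 2) + 1) * c =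
      c * (2 ^ (n - 2) + 2) + a * (2 ^ (n - 2) + 1) by ring, zpow_add, ← qx_zpow_mul_qy_sq, hu,
    one_mul]

lemma qx_zpow_mul_qy_conj_qx_zpow_mul_qy (hn : 4 ≤ n) (hx : orderOf (qx n) = 2 ^ (n - 1))
    {c : ℤ} (hu : (qx n ^ c * qy n) ^ 2 = 1) (a : ℤ) :
    qx n ^ c * qy n * (qx n ^ a * qy n) * (qx n ^ c * qy n)⁻¹ =
      (qx n ^ a * qy n) ^ (2 ^ (n - 2) + 1) := by
  obtain ⟨k, rfl⟩ := Nat.exists_eq_add_of_le' hn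
  rw [inv_eq_self_of_sq_eq_one hu, qx_zpow_mul_qy_mul_qx_zpow_mul_qy, ← mul_assoc,
    ← zpow_add, pow_succ, show 2 ^ (k + 4 - 2) = 2 ^ (k + 1) * 2 from rfl, pow_mul',
    qx_zpow_mul_qy_sq, ← zpow_natCast, ← zpow_mul, ← mul_assoc, ← zpow_add]
  rw [qx_zpow_mul_qy_sq, ← orderOf_dvd_iff_zpow_eq_one, hx] at hu
  simp only [show k + 4 - 1 = k + 3 from rfl, show k + 4 - 2 = k + 2 from rfl] at hu ⊢
  push_cast at hu ⊢
  -- The exponents differ by `2c - 2^(2n-5) a`: `u² = 1` forces `c` even and then `2^(n-1) ∣ 2c`,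
  -- while `2n - 5 ≥ n - 1` as `n ≥ 4`.
  obtain ⟨d, rfl⟩ : Even c := by
    have h4 : (4 : ℤ) ∣ c * (2 ^ (k + 2) + 2) := (Dvd.intro (2 * 2 ^ k) (by ring)).trans hu
    have : c * (2 ^ (k + 2) + 2) = 4 * (c * 2 ^ k) + 2 * c := by ring
    exact even_iff_two_dvd.2 (by omega)
  rw [show (d + d) * (2 ^ (k + 2) + 2) = 2 ^ (k + 3) * d + 4 * d by ring,
    dvd_add_right (dvd_mul_right _ d)] at hu
  congr 1
  refine qx_zpow_eq_qx_zpow_of_dvd ?_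
  rw [show d + d + (2 ^ (k + 2) + 1) * a + (d + d) - (a * (2 ^ (k + 2) + 2) * 2 ^ (k + 1) + a) =
    4 * d - 2 ^ (k + 3) * (2 ^ k * a) by ring]
  exact hu.sub (dvd_mul_right _ _)

theorem conj_eq_pow_of_closure_eq_top (hn : 4 ≤ n) {u w : QA n} (hu : u ^ 2 = 1)
    (hw : orderOf w = 2 ^ (n - 1)) (hgen : Subgroup.closure {u, w} = ⊤) :
    u * w * u⁻¹ = w ^ (2 ^ (n - 2) + 1) := by
  have hx := orderOf_qx (by omega) hw
  obtain ⟨c, rfl | rfl⟩ := exists_eq_qx_zpow_or_eq_qx_zpow_mul_qy u <;>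
    obtain ⟨a, rfl | rfl⟩ := exists_eq_qx_zpow_or_eq_qx_zpow_mul_qy w
  · exact absurd hgen (closure_qx_zpow_pair_ne_top (by omega) c a)
  · exact absurd hgen (closure_qx_zpow_qx_zpow_mul_qy_ne_top (by omega) hx hu hw)
  · exact qx_zpow_mul_qy_conj_qx_zpow hu a
  · exact qx_zpow_mul_qy_conj_qx_zpow_mul_qy hn hx hu a

end QA

theorem stmt11_general (n : ℕ) (hn : 4 ≤ n) (u v w : QA n) (huvw : u * v * w = 1)
    (hu : orderOf u = 2) (hw : orderOf w = 2 ^ (n - 1))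
    (hgen : Subgroup.closure {u, v, w} = (⊤ : Subgroup (QA n))) :
    ∃ φ : MulAut (QA n), φ u = qy n ∧ φ v = qy n * (qx n)⁻¹ ∧ φ w = qx n := by
  have hu2 : u ^ 2 = 1 := hu ▸ pow_orderOf_eq_one u
  have hv : v = u * w⁻¹ := by
    rw [← inv_eq_self_of_sq_eq_one hu2, eq_inv_mul_iff_mul_eq, eq_inv_iff_mul_eq_one, huvw]
  have hgen' : Subgroup.closure {u, w} = ⊤ := by
    refine top_le_iff.1 (hgen ▸ (Subgroup.closure_le _).2 ?_)
    have hu' : u ∈ Subgroup.closure {u, w} := Subgroup.subset_closure (.inl rfl)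
    have hw' : w ∈ Subgroup.closure {u, w} := Subgroup.subset_closure (.inr rfl)
    rintro g (rfl | rfl | rfl)
    exacts [hu', hv ▸ mul_mem hu' (inv_mem hw'), hw']
  set ψ := QA.lift (hw ▸ pow_orderOf_eq_one w) hu2
    (QA.conj_eq_pow_of_closure_eq_top hn hu2 hw hgen')
  have hψ : Function.Bijective ψ := by
    rw [← Finite.surjective_iff_bijective, ← MonoidHom.range_eq_top, eq_top_iff, ← hgen',
      Subgroup.closure_le]
    rintro g (rfl | rfl)
    exacts [⟨qy n, QA.lift_qy ..⟩, ⟨qx n, QA.lift_qx ..⟩]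
  refine ⟨(MulEquiv.ofBijective ψ hψ).symm, ?_, ?_, ?_⟩ <;>
    rw [MulEquiv.symm_apply_eq] <;> simp [ψ, hv]

/-- For `n ≥ 4`, any generating triple `(u, v, w)` of `QA_n` with `u v w = 1` and orders
`2`, `2^(n-1)`, `2^(n-1)` is mapped by some automorphism of `QA_n` to the triple
`(y, y x⁻¹, x)`; in particular any two such triples are `Aut(QA_n)`-equivalent. -/
theorem stmt11 (n : ℕ) (hn : 4 ≤ n) (u v w : QA n) (huvw : u * v * w = 1)
    (hu : orderOf u = 2) (hv : orderOf v = 2 ^ (n - 1)) (hw : orderOf w = 2 ^ (n - 1))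
    (hgen : Subgroup.closure {u, v, w} = (⊤ : Subgroup (QA n))) :
    ∃ φ : MulAut (QA n), φ u = qy n ∧ φ v = qy n * (qx n)⁻¹ ∧ φ w = qx n :=
  stmt11_general n hn u v w huvw hu hw hgen
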